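/- arXiv:0912.1824 — 4 statements merged into one kernel-verified Lean document; each statement's English description precedes it below -/
import Mathlib

section
/- Let m be an odd positive integer, and for k = 1, …, (m−1)/2 set μ_k = cos(kπ/m) > 0 and ω_k = sin(kπ/m) > 0. Let c_0, c_k, d_k be real numbers and define P : [0, ∞) → ℝ by P(t) = c_0 e^{−t} + Σ_{k=1}^{(m−1)/2} e^{−μ_k t} [c_k cos(ω_k t) + d_k sin(ω_k t)]. Assume the (one-sided) derivatives at 0 satisfy P^{(j)}(0) = 0 for every odd j with 1 ≤ j ≤ 2m−3, and P^{(2m−1)}(0) = −1/2. Then ∫_{−∞}^{∞} P(|τ|) dτ = 1 and ∫_{−∞}^{∞} τ^k P(|τ|) dτ = 0 for every k = 1, …, 2m−1; that is, t ↦ P(|t|) is a kernel of order 2m. -/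
/-!
Write `P(t) = Re Σ_k a_k e^{ζ_k t}` with `a_k = c_k - i d_k` and `ζ_k = -e^{-ikπ/m}`. The `ζ_k` are
`2m`-th roots of unity with negative real part, and `∫_0^∞ t^n e^{ζt} dt = n!/(-ζ)^{n+1}
= (-1)^{n+1} n! ζ^{2m-1-n}`. Hence `∫_0^∞ t^n P(t) dt = (-1)^{n+1} n! P^{(2m-1-n)}(0)`: the
conditions on the odd derivatives make the even moments of `P(|τ|)` equal to `1` (for `n = 0`)
and `0` (for `2 ≤ n ≤ 2m-2`), while its odd moments vanish by symmetry.
-/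

open MeasureTheory Set Filter Topology Nat Complex

section ExpMoments

variable {l : ℂ}

lemma hasDerivAt_cexp_mul_ofReal (l : ℂ) (t : ℝ) :
    HasDerivAt (fun s : ℝ => cexp (l * s)) (l * cexp (l * t)) t := by
  simpa [mul_comm] using (((hasDerivAt_id t).ofReal_comp).const_mul l).cexp

lemma norm_pow_mul_cexp_mul_ofReal {t : ℝ} (ht : 0 ≤ t) (n : ℕ) :
    ‖(t : ℂ) ^ n * cexp (l * t)‖ = t ^ n * Real.exp (l.re * t) := by
  simp [norm_pow, Complex.norm_exp, abs_of_nonneg ht]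

lemma tendsto_pow_mul_cexp_atTop (hl : l.re < 0) (n : ℕ) :
    Tendsto (fun t : ℝ => (t : ℂ) ^ n * cexp (l * t)) atTop (𝓝 0) := by
  have hbound : Tendsto (fun t : ℝ => t ^ n * Real.exp (l.re * t)) atTop (𝓝 0) := by
    simpa using tendsto_rpow_mul_exp_neg_mul_atTop_nhds_zero n (-l.re) (by linarith)
  refine squeeze_zero_norm' ?_ hbound
  filter_upwards [eventually_ge_atTop 0] with t ht
  exact (norm_pow_mul_cexp_mul_ofReal ht n).le

lemma integrableOn_Ioi_pow_mul_cexp (hl : l.re < 0) (n : ℕ) :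
    IntegrableOn (fun t : ℝ => (t : ℂ) ^ n * cexp (l * t)) (Ioi 0) := by
  have hbound : IntegrableOn (fun t : ℝ => t ^ n * Real.exp (l.re * t)) (Ioi 0) := by
    simpa using integrableOn_rpow_mul_exp_neg_mul_rpow (s := n) (p := 1) (b := -l.re)
      (by linarith [(Nat.cast_nonneg n : (0 : ℝ) ≤ n)]) one_pos (by linarith)
  refine hbound.mono' (by fun_prop) ?_
  filter_upwards [ae_restrict_mem measurableSet_Ioi] with t ht
  exact (norm_pow_mul_cexp_mul_ofReal (le_of_lt ht) n).le

lemma integral_Ioi_cexp (hl : l.re < 0) :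
    ∫ t in Ioi (0 : ℝ), cexp (l * t) = 1 / -l := by
  have hl0 : l ≠ 0 := by rintro rfl; simp at hl
  have hFTC := integral_Ioi_of_hasDerivAt_of_tendsto' (a := 0)
    (fun t _ => hasDerivAt_cexp_mul_ofReal l t)
    (by simpa only [IntegrableOn, pow_zero, one_mul] using
      (integrableOn_Ioi_pow_mul_cexp hl 0).const_mul l)
    (by simpa using tendsto_pow_mul_cexp_atTop hl 0)
  simp only [integral_const_mul, ofReal_zero, mul_zero, exp_zero] at hFTC
  field_simp
  linear_combination hFTC

lemma integral_Ioi_pow_succ_mul_cexp (hl : l.re < 0) (n : ℕ) :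
    ∫ t in Ioi (0 : ℝ), (t : ℂ) ^ (n + 1) * cexp (l * t) =
      (n + 1) / -l * ∫ t in Ioi (0 : ℝ), (t : ℂ) ^ n * cexp (l * t) := by
  have hl0 : l ≠ 0 := by rintro rfl; simp at hl
  have hderiv (t : ℝ) : HasDerivAt (fun s : ℝ => (s : ℂ) ^ (n + 1) * cexp (l * s))
      ((n + 1) * ((t : ℂ) ^ n * cexp (l * t)) + l * ((t : ℂ) ^ (n + 1) * cexp (l * t))) t := by
    refine (((hasDerivAt_pow (n + 1) (t : ℂ)).comp_ofReal).fun_mul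
      (hasDerivAt_cexp_mul_ofReal l t)).congr_deriv ?_
    push_cast
    ring
  have hFTC := integral_Ioi_of_hasDerivAt_of_tendsto' (a := 0) (fun t _ => hderiv t)
    (((integrableOn_Ioi_pow_mul_cexp hl n).const_mul _).add
      ((integrableOn_Ioi_pow_mul_cexp hl (n + 1)).const_mul l))
    (tendsto_pow_mul_cexp_atTop hl (n + 1))
  rw [integral_add ((integrableOn_Ioi_pow_mul_cexp hl n).const_mul _)
    ((integrableOn_Ioi_pow_mul_cexp hl (n + 1)).const_mul l), integral_const_mul,
    integral_const_mul] at hFTC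
  simp only [ofReal_zero, zero_pow n.succ_ne_zero, zero_mul, sub_zero] at hFTC
  field_simp
  linear_combination hFTC

lemma integral_Ioi_pow_mul_cexp (hl : l.re < 0) (n : ℕ) :
    ∫ t in Ioi (0 : ℝ), (t : ℂ) ^ n * cexp (l * t) = n ! / (-l) ^ (n + 1) := by
  induction n with
  | zero => simpa using integral_Ioi_cexp hl
  | succ n ih =>
    rw [integral_Ioi_pow_succ_mul_cexp hl, ih, Nat.factorial_succ, pow_succ' _ (n + 1)]
    push_cast
    ring

end ExpMoments

section ExpPolynomial

variable {ι : Type*} (s : Finset ι) (a l : ι → ℂ)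

noncomputable def reExpSum (t : ℝ) : ℝ := ∑ k ∈ s, (a k * cexp (l k * t)).re

lemma reExpSum_zero : reExpSum s a l 0 = ∑ k ∈ s, (a k).re := by
  simp [reExpSum]

lemma hasDerivAt_reExpSum (t : ℝ) :
    HasDerivAt (reExpSum s a l) (reExpSum s (fun k => a k * l k) l t) t := by
  refine HasDerivAt.fun_sum fun k _ => ?_
  have hre := reCLM.hasFDerivAt.comp_hasDerivAt t
    ((hasDerivAt_cexp_mul_ofReal (l k) t).const_mul (a k))
  simpa only [Function.comp_def, reCLM_apply, mul_assoc, mul_left_comm (l k)] using hre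

lemma iteratedDeriv_reExpSum (n : ℕ) :
    iteratedDeriv n (reExpSum s a l) = reExpSum s (fun k => a k * l k ^ n) l := by
  induction n with
  | zero => simp
  | succ n ih =>
    funext t
    rw [iteratedDeriv_succ, ih, (hasDerivAt_reExpSum s _ l t).deriv]
    simp only [pow_succ, mul_assoc]

variable {s l}

lemma integral_Ioi_pow_mul_reExpSum (hl : ∀ k ∈ s, (l k).re < 0) (n : ℕ) :
    ∫ t in Ioi (0 : ℝ), t ^ n * reExpSum s a l t = ∑ k ∈ s, (n ! / (-l k) ^ (n + 1) * a k).re := by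
  have hint : ∀ k ∈ s, IntegrableOn (fun t : ℝ => a k * ((t : ℂ) ^ n * cexp (l k * t))) (Ioi 0) :=
    fun k hk => (integrableOn_Ioi_pow_mul_cexp (hl k hk) n).const_mul (a k)
  calc ∫ t in Ioi (0 : ℝ), t ^ n * reExpSum s a l t
      = ∫ t in Ioi (0 : ℝ), ∑ k ∈ s, (a k * ((t : ℂ) ^ n * cexp (l k * t))).re := by
        refine integral_congr_ae (ae_of_all _ fun t => ?_)
        simp only [reExpSum, Finset.mul_sum, ← re_ofReal_mul]
        congr! 2
        push_cast
        ring
    _ = ∑ k ∈ s, (∫ t in Ioi (0 : ℝ), a k * ((t : ℂ) ^ n * cexp (l k * t))).re := by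
        refine (integral_finsetSum _ fun k hk => (hint k hk).re).trans ?_
        exact Finset.sum_congr rfl fun k hk => integral_re (hint k hk)
    _ = ∑ k ∈ s, (n ! / (-l k) ^ (n + 1) * a k).re := by
        refine Finset.sum_congr rfl fun k hk => ?_
        rw [integral_const_mul, integral_Ioi_pow_mul_cexp (hl k hk), mul_comm]

lemma integral_Ioi_pow_mul_reExpSum_eq_iteratedDeriv {N : ℕ} (hl : ∀ k ∈ s, (l k).re < 0)
    (hroot : ∀ k ∈ s, l k ^ N = 1) {n : ℕ} (hn : n < N) :
    ∫ t in Ioi (0 : ℝ), t ^ n * reExpSum s a l t =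
      (-1) ^ (n + 1) * n ! * iteratedDeriv (N - 1 - n) (reExpSum s a l) 0 := by
  rw [integral_Ioi_pow_mul_reExpSum a hl, iteratedDeriv_reExpSum, reExpSum_zero, Finset.mul_sum]
  refine Finset.sum_congr rfl fun k hk => ?_
  have hinv : (l k ^ (n + 1))⁻¹ = l k ^ (N - 1 - n) := by
    refine inv_eq_of_mul_eq_one_right ?_
    rw [← pow_add, show n + 1 + (N - 1 - n) = N by omega, hroot k hk]
  rw [neg_pow, div_eq_mul_inv, mul_inv, hinv, ← inv_pow, inv_neg_one, ← re_ofReal_mul]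
  congr 1
  push_cast
  ring

end ExpPolynomial

lemma integral_pow_mul_comp_abs_of_even {f : ℝ → ℝ} {k : ℕ} (hk : Even k) :
    ∫ τ : ℝ, τ ^ k * f |τ| = 2 * ∫ t in Ioi (0 : ℝ), t ^ k * f t := by
  simpa only [hk.pow_abs] using integral_comp_abs (f := fun t => t ^ k * f t)

lemma integral_pow_mul_comp_abs_of_odd {f : ℝ → ℝ} {k : ℕ} (hk : Odd k) :
    ∫ τ : ℝ, τ ^ k * f |τ| = 0 := by
  have hsymm := integral_neg_eq_self (fun τ : ℝ => τ ^ k * f |τ|) volume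
  simp only [hk.neg_pow, abs_neg, neg_mul, integral_neg] at hsymm
  linarith

lemma re_ofReal_sub_ofReal_mul_I_mul_cexp (c d : ℝ) (l : ℂ) (t : ℝ) :
    ((c - d * I) * cexp (l * t)).re =
      Real.exp (l.re * t) * (c * Real.cos (l.im * t) + d * Real.sin (l.im * t)) := by
  simp only [mul_re, sub_re, sub_im, ofReal_re, ofReal_im, mul_im, I_re, I_im, exp_re, exp_im,
    mul_zero, sub_zero, zero_add]
  ring

/-- The paper's exponent `-μ_k + iω_k = -e^{-ikπ/m}`, a `2m`-th root of unity. -/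
noncomputable def kernelExponent (m k : ℕ) : ℂ := cexp (↑(Real.pi - k * Real.pi / m) * I)

lemma kernelExponent_re (m k : ℕ) : (kernelExponent m k).re = -Real.cos (k * Real.pi / m) := by
  rw [kernelExponent, exp_ofReal_mul_I_re, Real.cos_pi_sub]

lemma kernelExponent_im (m k : ℕ) : (kernelExponent m k).im = Real.sin (k * Real.pi / m) := by
  rw [kernelExponent, exp_ofReal_mul_I_im, Real.sin_pi_sub]

lemma kernelExponent_pow_two_mul {m : ℕ} (hm : m ≠ 0) (k : ℕ) :
    kernelExponent m k ^ (2 * m) = 1 := by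
  rw [kernelExponent, ← exp_nat_mul]
  convert exp_int_mul_two_pi_mul_I ((m : ℤ) - k) using 2
  push_cast
  field_simp

lemma kernelExponent_re_neg {m k : ℕ} (hk : 2 * k < m) : (kernelExponent m k).re < 0 := by
  have hm : (0 : ℝ) < m := by exact_mod_cast (show 0 < m by omega)
  have hk' : (2 * k : ℝ) < m := by exact_mod_cast hk
  rw [kernelExponent_re, neg_lt_zero]
  have hpos : 0 ≤ k * Real.pi / m := by positivity
  refine Real.cos_pos_of_mem_Ioo ⟨by linarith [Real.pi_pos], ?_⟩
  rw [div_lt_div_iff₀ hm two_pos]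
  nlinarith [Real.pi_pos]

theorem stmt_5_general (m : ℕ) (hm0 : 0 < m)
    (c d : ℕ → ℝ) (P : ℝ → ℝ)
    (hP : ∀ t : ℝ, P t = c 0 * Real.exp (-t) + ∑ k ∈ Finset.Icc 1 ((m - 1) / 2),
      Real.exp (-(Real.cos ((k : ℝ) * Real.pi / (m : ℝ))) * t) *
        (c k * Real.cos (Real.sin ((k : ℝ) * Real.pi / (m : ℝ)) * t) +
         d k * Real.sin (Real.sin ((k : ℝ) * Real.pi / (m : ℝ)) * t)))
    (hodd : ∀ j : ℕ, Odd j → 1 ≤ j → j ≤ 2 * m - 3 → iteratedDeriv j P 0 = 0)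
    (htop : iteratedDeriv (2 * m - 1) P 0 = -(1 / 2)) :
    (∫ τ : ℝ, P |τ|) = 1 ∧
      ∀ k : ℕ, 1 ≤ k → k ≤ 2 * m - 1 → (∫ τ : ℝ, τ ^ k * P |τ|) = 0 := by
  set S := insert 0 (Finset.Icc 1 ((m - 1) / 2))
  have hS : ∀ k ∈ S, 2 * k < m := by
    intro k hk
    rcases Finset.mem_insert.mp hk with rfl | hk
    · omega
    · have := (Finset.mem_Icc.mp hk).2; omega
  have hPexp : P = reExpSum S (fun k => c k - d k * I) (kernelExponent m) := by
    funext t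
    rw [hP, reExpSum, Finset.sum_insert (by simp)]
    congr 1
    · rw [re_ofReal_sub_ofReal_mul_I_mul_cexp, kernelExponent_re, kernelExponent_im]
      simp [mul_comm]
    · refine Finset.sum_congr rfl fun k _ => ?_
      rw [re_ofReal_sub_ofReal_mul_I_mul_cexp, kernelExponent_re, kernelExponent_im]
  have hmoment : ∀ j < m, ∫ t in Ioi (0 : ℝ), t ^ (2 * j) * P t =
      -((2 * j) ! : ℝ) * iteratedDeriv (2 * m - 1 - 2 * j) P 0 := by
    intro j hj
    rw [hPexp, integral_Ioi_pow_mul_reExpSum_eq_iteratedDeriv _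
      (fun k hk => kernelExponent_re_neg (hS k hk))
      (fun k _ => kernelExponent_pow_two_mul hm0.ne' k) (by omega : 2 * j < 2 * m),
      pow_succ, (even_two_mul j).neg_one_pow]
    ring
  refine ⟨?_, fun k hk1 hk2 => ?_⟩
  · have hsymm := integral_pow_mul_comp_abs_of_even (f := P) Even.zero
    have hmass := hmoment 0 hm0
    simp only [mul_zero, pow_zero, one_mul, Nat.sub_zero] at hsymm hmass
    rw [hsymm, hmass, htop]
    norm_num
  · rcases k.even_or_odd with ⟨j, rfl⟩ | hk
    · rw [integral_pow_mul_comp_abs_of_even ⟨j, rfl⟩, ← two_mul, hmoment j (by omega),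
        hodd _ ⟨m - 1 - j, by omega⟩ (by omega) (by omega)]
      ring
    · exact integral_pow_mul_comp_abs_of_odd hk

/-- Odd-`m` case of the Proposition in Section 3.3 (β = 1): if
`P(t) = c_0 e^{−t} + Σ_{k=1}^{(m−1)/2} e^{−μ_k t}[c_k cos(ω_k t) + d_k sin(ω_k t)]` with
`μ_k = cos(kπ/m)`, `ω_k = sin(kπ/m)`, and the derivatives at `0` satisfy `P^{(j)}(0) = 0`
for odd `1 ≤ j ≤ 2m−3` and `P^{(2m−1)}(0) = −1/2`, then `t ↦ P(|t|)` is a kernel of order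
`2m`. -/
theorem stmt_5 (m : ℕ) (hm : Odd m) (hm0 : 0 < m)
    (c d : ℕ → ℝ) (P : ℝ → ℝ)
    (hP : ∀ t : ℝ, P t = c 0 * Real.exp (-t) + ∑ k ∈ Finset.Icc 1 ((m - 1) / 2),
      Real.exp (-(Real.cos ((k : ℝ) * Real.pi / (m : ℝ))) * t) *
        (c k * Real.cos (Real.sin ((k : ℝ) * Real.pi / (m : ℝ)) * t) +
         d k * Real.sin (Real.sin ((k : ℝ) * Real.pi / (m : ℝ)) * t)))
    (hodd : ∀ j : ℕ, Odd j → 1 ≤ j → j ≤ 2 * m - 3 → iteratedDeriv j P 0 = 0)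
    (htop : iteratedDeriv (2 * m - 1) P 0 = -(1 / 2)) :
    (∫ τ : ℝ, P |τ|) = 1 ∧
      ∀ k : ℕ, 1 ≤ k → k ≤ 2 * m - 1 → (∫ τ : ℝ, τ ^ k * P |τ|) = 0 :=
  stmt_5_general m hm0 c d P hP hodd htop
end

section
/- Let m be an even positive integer, ω_j = sin((1+2j)π/(2m)) for j = 0, …, m/2 − 1, and β ∈ ℝ. Define ψ_{j,ℓ} = β ω_j + (2j+1) ℓ π/(2m). Let B be the m×m real matrix with rows indexed by ℓ = 0, …, m−1 whose entry in row ℓ and column 2j+1 is cos(ψ_{j,ℓ}) and in row ℓ and column 2j+2 is sin(ψ_{j,ℓ}). Then B is invertible for every β ∈ ℝ. -/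
/-!
Complexify. Since `cos ψ ± i sin ψ = exp (± i ψ)`, for each `j` a combination of the columns
`2j` and `2j+1` of `B`, with weights absorbing the phase `β ω_j`, is the Vandermonde column
`(z ^ ℓ)_ℓ` at the node `z = exp (± i θ_j)`, `θ_j = (2j+1)π/(2m)`. So `B D = Vᵀ` for some
complex `D`, where `V` is the Vandermonde matrix of the `m` nodes `exp (± i θ_j)`. These nodes
are distinct because the `θ_j` are distinct points of `(0, π)`, so `V`, and hence `B`, is
invertible.
-/

open Complex Matrix

theorem Complex.injOn_exp_mul_I :
    Set.InjOn (fun x : ℝ => exp (x * I)) (Set.Ioc (-Real.pi) Real.pi) := by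
  intro x hx y hy h
  have hxy := congrArg arg h
  have hp : -Real.pi + 2 * Real.pi = Real.pi := by ring
  simp only [arg_exp_mul_I] at hxy
  rwa [(toIocMod_eq_self _).mpr (by rwa [hp]), (toIocMod_eq_self _).mpr (by rwa [hp])] at hxy

theorem Complex.cos_add_sign_mul_sin_mul_I {σ : ℝ} (hσ : σ = 1 ∨ σ = -1) (ψ : ℝ) :
    (Real.cos ψ : ℂ) + σ * Real.sin ψ * I = exp ((σ * ψ : ℝ) * I) := by
  rcases hσ with rfl | rfl
  · simp [exp_mul_I]
  · rw [exp_mul_I]; push_cast; simp only [neg_one_mul, cos_neg, sin_neg]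

theorem Matrix.isUnit_of_isUnit_map_mul {n K L : Type*} [Fintype n] [DecidableEq n] [Field K]
    [Field L] (f : K →+* L) {A : Matrix n n K} {D : Matrix n n L} (h : IsUnit (A.map f * D)) :
    IsUnit A := by
  rw [isUnit_iff_isUnit_det, det_mul] at h
  have hA : f A.det ≠ 0 := by
    rw [RingHom.map_det]; exact (isUnit_of_mul_isUnit_left h).ne_zero
  exact (isUnit_iff_isUnit_det A).mpr ((map_ne_zero f).mp hA).isUnit

noncomputable def cosSinMatrix (m : ℕ) (θ a : ℕ → ℝ) : Matrix (Fin m) (Fin m) ℝ :=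
  of fun ℓ c => (if c.val % 2 = 0 then Real.cos else Real.sin) (a (c / 2) + θ (c / 2) * ℓ)

namespace CosSinMatrix

variable {m : ℕ} {θ : ℕ → ℝ}

noncomputable def nodes (m : ℕ) (θ : ℕ → ℝ) (c : Fin m) : ℂ :=
  exp (((-1) ^ (c : ℕ) * θ (c / 2) : ℝ) * I)

theorem nodes_injective (hθ : ∀ j, 2 * j < m → θ j ∈ Set.Ioo 0 Real.pi)
    (hinj : Set.InjOn θ {j | 2 * j < m}) : Function.Injective (nodes m θ) := by
  have hmem : ∀ c : Fin m, (-1) ^ (c : ℕ) * θ (c / 2) ∈ Set.Ioc (-Real.pi) Real.pi := by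
    intro c
    obtain ⟨h0, hπ⟩ := hθ (c / 2) (by omega)
    rcases neg_one_pow_eq_or ℝ (c : ℕ) with h | h <;> rw [h] <;> constructor <;> linarith
  intro c c' h
  have h := injOn_exp_mul_I (hmem c) (hmem c') h
  obtain ⟨hpar, hθc⟩ : (c : ℕ) % 2 = c' % 2 ∧ θ (c / 2) = θ (c' / 2) := by
    have hpos := (hθ (c / 2) (by omega)).1
    have hpos' := (hθ (c' / 2) (by omega)).1
    rw [neg_one_pow_eq_pow_mod_two, neg_one_pow_eq_pow_mod_two (c' : ℕ)] at h
    rcases Nat.mod_two_eq_zero_or_one c with hc | hc <;>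
      rcases Nat.mod_two_eq_zero_or_one c' with hc' | hc' <;>
      simp [hc, hc'] at h ⊢ <;> linarith
  have := hinj (show 2 * (c / 2 : ℕ) < m by omega) (show 2 * (c' / 2 : ℕ) < m by omega) hθc
  exact Fin.ext (by omega)

/-- With `j = c / 2` and `σ = (-1) ^ c`, column `c` is `exp (-iσ a_j) (e_{2j} + iσ e_{2j+1})`:
it combines `cos (a_j + θ_j ℓ)` and `sin (a_j + θ_j ℓ)` into `exp (iσ θ_j ℓ)`. -/
noncomputable def phaseMatrix (m : ℕ) (a : ℕ → ℝ) : Matrix (Fin m) (Fin m) ℂ :=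
  of fun k c =>
    if (k : ℕ) / 2 = c / 2 then
      (if (k : ℕ) % 2 = 0 then 1 else (-1) ^ (c : ℕ) * I) *
        exp ((-((-1) ^ (c : ℕ) * a (c / 2)) : ℝ) * I)
    else 0

theorem map_mul_phaseMatrix (hm : Even m) (a : ℕ → ℝ) :
    (cosSinMatrix m θ a).map ofRealHom * phaseMatrix m a = (vandermonde (nodes m θ))ᵀ := by
  ext ℓ c
  obtain ⟨j, hj⟩ : ∃ j, j = (c : ℕ) / 2 := ⟨_, rfl⟩
  have hc := c.isLt
  obtain ⟨r, rfl⟩ := hm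
  let k₀ : Fin (r + r) := ⟨2 * j, by omega⟩
  let k₁ : Fin (r + r) := ⟨2 * j + 1, by omega⟩
  have hσ : (-1 : ℝ) ^ (c : ℕ) = 1 ∨ (-1 : ℝ) ^ (c : ℕ) = -1 := neg_one_pow_eq_or ℝ _
  rw [mul_apply, Fintype.sum_eq_add k₀ k₁ (by simp [k₀, k₁, Fin.ext_iff])]
  · simp only [map_apply, cosSinMatrix, phaseMatrix, of_apply, transpose_apply,
      vandermonde_apply, nodes, k₀, k₁]
    have h₀ : 2 * j % 2 = 0 ∧ 2 * j / 2 = j := by omega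
    have h₁ : (2 * j + 1) % 2 = 1 ∧ (2 * j + 1) / 2 = j := by omega
    simp only [h₀, h₁, ← hj, if_true, if_false, one_ne_zero, one_mul, ofRealHom_eq_coe]
    set ψ := a j + θ j * ℓ
    set E := exp ((-((-1) ^ (c : ℕ) * a j) : ℝ) * I)
    calc (Real.cos ψ : ℂ) * E + Real.sin ψ * ((-1) ^ (c : ℕ) * I * E)
        = ((Real.cos ψ : ℂ) + ((-1) ^ (c : ℕ) : ℝ) * Real.sin ψ * I) * E := by
          push_cast; ring
      _ = exp (((-1) ^ (c : ℕ) * ψ : ℝ) * I) * E := by rw [cos_add_sign_mul_sin_mul_I hσ]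
      _ = exp (((-1) ^ (c : ℕ) * θ j : ℝ) * I) ^ (ℓ : ℕ) := by
          rw [← exp_add, ← exp_nat_mul]; congr 1; push_cast [ψ]; ring
  · rintro k ⟨hk₀, hk₁⟩
    have : (k : ℕ) / 2 ≠ c / 2 := fun h => by
      rcases Nat.mod_two_eq_zero_or_one k with hk | hk
      · exact hk₀ (Fin.ext (by simp [k₀]; omega))
      · exact hk₁ (Fin.ext (by simp [k₁]; omega))
    simp [phaseMatrix, this]

end CosSinMatrix

open CosSinMatrix in
theorem isUnit_cosSinMatrix {m : ℕ} (hm : Even m) {θ : ℕ → ℝ}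
    (hθ : ∀ j, 2 * j < m → θ j ∈ Set.Ioo 0 Real.pi) (hinj : Set.InjOn θ {j | 2 * j < m})
    (a : ℕ → ℝ) : IsUnit (cosSinMatrix m θ a) := by
  refine isUnit_of_isUnit_map_mul ofRealHom (D := phaseMatrix m a) ?_
  rw [map_mul_phaseMatrix hm, isUnit_iff_isUnit_det, det_transpose]
  exact (det_vandermonde_ne_zero_iff.mpr (nodes_injective hθ hinj)).isUnit

theorem stmt_9_general (m : ℕ) (hm : Even m) (β : ℝ)
    (B : Matrix (Fin m) (Fin m) ℝ)
    (hB : ∀ l c : Fin m, B l c =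
      if c.val % 2 = 0
      then Real.cos (β * Real.sin ((1 + 2 * ((c.val / 2 : ℕ) : ℝ)) * Real.pi / (2 * m)) +
        (2 * ((c.val / 2 : ℕ) : ℝ) + 1) * (l.val : ℝ) * Real.pi / (2 * m))
      else Real.sin (β * Real.sin ((1 + 2 * ((c.val / 2 : ℕ) : ℝ)) * Real.pi / (2 * m)) +
        (2 * ((c.val / 2 : ℕ) : ℝ) + 1) * (l.val : ℝ) * Real.pi / (2 * m))) :
    IsUnit B := by
  set θ : ℕ → ℝ := fun j => (2 * j + 1) * Real.pi / (2 * m)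
  have hθ : ∀ j, 2 * j < m → θ j ∈ Set.Ioo 0 Real.pi := fun j hj => by
    have hj' : (2 * j + 1 : ℝ) < 2 * m := by exact_mod_cast (by omega : 2 * j + 1 < 2 * m)
    have hm_pos : (0 : ℝ) < m := by exact_mod_cast (by omega : 0 < m)
    constructor
    · positivity
    · rw [div_lt_iff₀ (by positivity)]; nlinarith [Real.pi_pos]
  have hinj : Set.InjOn θ {j | 2 * j < m} := fun i (hi : 2 * i < m) j _ h => by
    have hm_ne : (2 * m : ℝ) ≠ 0 := by norm_cast; omega
    rw [div_left_inj' hm_ne, mul_left_inj' Real.pi_ne_zero] at h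
    exact_mod_cast (by linarith : (i : ℝ) = j)
  have hB' : B = cosSinMatrix m θ (fun j => β * Real.sin (θ j)) := by
    ext l c
    rw [hB]
    simp only [cosSinMatrix, θ, of_apply]
    split_ifs <;> ring_nf
  exact hB' ▸ isUnit_cosSinMatrix hm hθ hinj _

/-- Invertibility of the boundary-condition matrix `B^e_{22}` of Lemma 2 (even `m`):
with `ω_j = sin((1+2j)π/(2m))` and `ψ_{j,ℓ} = βω_j + (2j+1)ℓπ/(2m)`, the `m × m` matrix
whose row `ℓ` is `(cos(ψ_{0,ℓ}), sin(ψ_{0,ℓ}), …, cos(ψ_{m/2−1,ℓ}), sin(ψ_{m/2−1,ℓ}))`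
is invertible for every `β ∈ ℝ`. -/
theorem stmt_9 (m : ℕ) (hm : Even m) (hm0 : 0 < m) (β : ℝ)
    (B : Matrix (Fin m) (Fin m) ℝ)
    (hB : ∀ l c : Fin m, B l c =
      if c.val % 2 = 0
      then Real.cos (β * Real.sin ((1 + 2 * ((c.val / 2 : ℕ) : ℝ)) * Real.pi / (2 * m)) +
        (2 * ((c.val / 2 : ℕ) : ℝ) + 1) * (l.val : ℝ) * Real.pi / (2 * m))
      else Real.sin (β * Real.sin ((1 + 2 * ((c.val / 2 : ℕ) : ℝ)) * Real.pi / (2 * m)) +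
        (2 * ((c.val / 2 : ℕ) : ℝ) + 1) * (l.val : ℝ) * Real.pi / (2 * m))) :
    IsUnit B :=
  stmt_9_general m hm β B hB
end

section
/- Let m be an odd positive integer and γ_k = π − kπ/m for k = 1, …, (m−1)/2. Let B be the m×m real matrix with rows indexed by j = 0, …, m−1 whose first-column entry in row j is (−1)^j and whose entries in row j and columns 2k, 2k+1 are cos(j γ_k) and sin(j γ_k), for k = 1, …, (m−1)/2. Then B is invertible. -/
/-!
Over `ℂ` the columns of `B` can be recombined into the columns `e^{ijθ}` with `θ = π, ±γ_k`:
`(-1)^j = e^{ijπ}` and `cos (jγ_k) ± i sin (jγ_k) = e^{±ijγ_k}`. So `B * D` is the transposed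
Vandermonde matrix of the `m` nodes `e^{iθ}` for some matrix `D`. Modulo `2π` these angles are
`π + sπ/m` with distinct integers `|s| ≤ m/2`, so they lie in an interval of length `π` and the
nodes are distinct; hence that Vandermonde matrix, and with it `B`, is invertible.
-/

open Complex Matrix Real

theorem Matrix.isUnit_of_forall_exists_mulVec_eq {n R : Type*} [Fintype n] [DecidableEq n]
    [CommRing R] {A N : Matrix n n R} (hN : IsUnit N)
    (h : ∀ c, ∃ d, A *ᵥ d = fun j ↦ N j c) :
    IsUnit A := by
  choose d hd using h
  have hAD : A * Matrix.of (fun c' c ↦ d c c') = N := by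
    ext j c
    exact congrFun (hd c) j
  rw [isUnit_iff_isUnit_det] at hN ⊢
  rw [← hAD, det_mul] at hN
  exact isUnit_of_mul_isUnit_left hN

theorem Matrix.isUnit_of_isUnit_map {n R S : Type*} [Fintype n] [DecidableEq n] [CommRing R]
    [CommRing S] (f : R →+* S) [IsLocalHom f] {A : Matrix n n R} (h : IsUnit (A.map f)) :
    IsUnit A := by
  rw [isUnit_iff_isUnit_det] at h ⊢
  rw [← RingHom.mapMatrix_apply, ← RingHom.map_det] at h
  exact (isUnit_map_iff f _).mp h

theorem Complex.exp_mul_I_pow (x : ℝ) (j : ℕ) :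
    exp (x * I) ^ j = Real.cos (j * x) + Real.sin (j * x) * I := by
  rw [exp_mul_I, cos_add_sin_mul_I_pow]
  push_cast
  rfl

theorem Complex.exp_neg_mul_I_pow (x : ℝ) (j : ℕ) :
    exp (-x * I) ^ j = Real.cos (j * x) - Real.sin (j * x) * I := by
  rw [← ofReal_neg, exp_mul_I_pow, mul_neg, Real.cos_neg, Real.sin_neg, ofReal_neg]
  ring

/-- `-k` for column `c = 2k - 1`, whose node is `e^{iγ_k}`, and `k` for column `c = 2k`, whose node
is `e^{-iγ_k}`. -/
def signedFreq (c : ℕ) : ℤ := if c % 2 = 1 then -((c + 1) / 2 : ℕ) else (c / 2 : ℕ)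

theorem signedFreq_injective : Function.Injective signedFreq := by
  intro a b h
  unfold signedFreq at h
  split_ifs at h <;> omega

theorem signedFreq_bounds {m c : ℕ} (hc : c < m) :
    -(m : ℤ) ≤ 2 * signedFreq c ∧ 2 * signedFreq c ≤ m := by
  unfold signedFreq
  split_ifs <;> omega

noncomputable def nodeAngle (m c : ℕ) : ℝ := π + signedFreq c * π / m

noncomputable def node (m c : ℕ) : ℂ := exp (nodeAngle m c * I)

theorem nodeAngle_injective {m : ℕ} (hm : 0 < m) : Function.Injective (nodeAngle m) := by
  intro a b h
  have hπm : π / m ≠ 0 := by positivity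
  rw [nodeAngle, nodeAngle, mul_div_assoc, mul_div_assoc] at h
  exact signedFreq_injective (by exact_mod_cast mul_right_cancel₀ hπm (add_left_cancel h))

theorem nodeAngle_mem_Icc {m c : ℕ} (hc : c < m) :
    nodeAngle m c ∈ Set.Icc (π / 2) (3 * π / 2) := by
  have hm : (0 : ℝ) < m := by exact_mod_cast (Nat.zero_le c).trans_lt hc
  obtain ⟨hlow, hup⟩ := signedFreq_bounds hc
  have hlow' : -(m : ℝ) ≤ 2 * signedFreq c := by exact_mod_cast hlow
  have hup' : 2 * (signedFreq c : ℝ) ≤ m := by exact_mod_cast hup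
  have hlow'' : -(π / 2) ≤ signedFreq c * π / m := by rw [le_div_iff₀ hm]; nlinarith [pi_pos]
  have hup'' : signedFreq c * π / m ≤ π / 2 := by rw [div_le_iff₀ hm]; nlinarith [pi_pos]
  constructor <;> unfold nodeAngle <;> linarith

theorem node_injOn (m : ℕ) : Set.InjOn (node m) (Set.Iio m) := by
  intro a ha b hb hab
  refine nodeAngle_injective ((Nat.zero_le a).trans_lt ha) ?_
  exact Circle.exp_injOn_Icc (by linarith [pi_pos]) (nodeAngle_mem_Icc ha) (nodeAngle_mem_Icc hb)
    (Subtype.ext hab)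

theorem node_zero (m : ℕ) : node m 0 = -1 := by
  simp [node, nodeAngle, signedFreq, exp_pi_mul_I]

theorem node_of_odd {m c : ℕ} (hc : c % 2 = 1) :
    node m c = exp ((π - ((c + 1) / 2 : ℕ) * π / m : ℝ) * I) := by
  rw [node, nodeAngle, signedFreq, if_pos hc, Int.cast_neg, Int.cast_natCast]
  ring_nf

theorem node_of_even {m c : ℕ} (hc : c % 2 = 0) :
    node m c = exp (-(π - (c / 2 : ℕ) * π / m : ℝ) * I) := by
  have hangle :
      (nodeAngle m c : ℂ) * I = -(π - (c / 2 : ℕ) * π / m : ℝ) * I + 2 * π * I := by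
    rw [nodeAngle, signedFreq, if_neg (by omega), Int.cast_natCast]
    push_cast
    ring
  rw [node, hangle, Complex.exp_add, exp_two_pi_mul_I, mul_one]

theorem exists_mulVec_eq_node_pow {m : ℕ} (hm : Odd m) {γ : ℕ → ℝ}
    (hγ : ∀ k : ℕ, γ k = Real.pi - (k : ℝ) * Real.pi / (m : ℝ))
    {B : Matrix (Fin m) (Fin m) ℝ}
    (hB : ∀ j c : Fin m, B j c =
      if c.val = 0 then (-1 : ℝ) ^ j.val
      else if c.val % 2 = 1
      then Real.cos ((j.val : ℝ) * γ ((c.val + 1) / 2))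
      else Real.sin ((j.val : ℝ) * γ (c.val / 2)))
    (c : Fin m) : ∃ d, B.map ofRealHom *ᵥ d = fun j : Fin m ↦ node m c ^ (j : ℕ) := by
  obtain ⟨c, hc⟩ := c
  have hm2 := Nat.odd_iff.mp hm
  rcases Nat.eq_zero_or_pos c with rfl | hc0
  · refine ⟨Pi.single ⟨0, hc⟩ 1, funext fun j ↦ ?_⟩
    simp [mulVec_single, hB, node_zero]
  rcases Nat.mod_two_eq_zero_or_one c with heven | hodd
  · refine ⟨Pi.single ⟨c - 1, by omega⟩ 1 + Pi.single ⟨c, hc⟩ (-I), 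
      funext fun j ↦ ?_⟩
    rw [node_of_even heven, exp_neg_mul_I_pow, ← hγ]
    simp only [mulVec_add, mulVec_single, Pi.add_apply, Pi.smul_apply, col_apply, op_smul_eq_mul,
      map_apply, ofRealHom_eq_coe, hB, show c - 1 ≠ 0 by omega, show (c - 1) % 2 = 1 by omega,
      show c ≠ 0 by omega, show c % 2 ≠ 1 by omega, show (c - 1 + 1) / 2 = c / 2 by omega,
      ↓reduceIte]
    ring
  · refine ⟨Pi.single ⟨c, hc⟩ 1 + Pi.single ⟨c + 1, by omega⟩ I, funext fun j ↦ ?_⟩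
    rw [node_of_odd hodd, exp_mul_I_pow, ← hγ]
    simp only [mulVec_add, mulVec_single, Pi.add_apply, Pi.smul_apply, col_apply, op_smul_eq_mul,
      map_apply, ofRealHom_eq_coe, hB, show c ≠ 0 by omega, hodd, show c + 1 ≠ 0 by omega,
      show (c + 1) % 2 ≠ 1 by omega, ↓reduceIte]
    ring

theorem stmt_10_general (m : ℕ) (hm : Odd m)
    (γ : ℕ → ℝ) (hγ : ∀ k : ℕ, γ k = Real.pi - (k : ℝ) * Real.pi / (m : ℝ))
    (B : Matrix (Fin m) (Fin m) ℝ)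
    (hB : ∀ j c : Fin m, B j c =
      if c.val = 0 then (-1 : ℝ) ^ j.val
      else if c.val % 2 = 1
      then Real.cos ((j.val : ℝ) * γ ((c.val + 1) / 2))
      else Real.sin ((j.val : ℝ) * γ (c.val / 2))) :
    IsUnit B := by
  have hnode : Function.Injective fun c : Fin m ↦ node m c :=
    fun a b h ↦ Fin.ext (node_injOn m a.isLt b.isLt h)
  have hV : IsUnit (vandermonde fun c : Fin m ↦ node m c)ᵀ := by
    rw [isUnit_iff_isUnit_det, det_transpose, isUnit_iff_ne_zero]
    exact det_vandermonde_ne_zero_iff.mpr hnode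
  exact isUnit_of_isUnit_map ofRealHom <|
    isUnit_of_forall_exists_mulVec_eq hV (exists_mulVec_eq_node_pow hm hγ hB)

/-- Invertibility of the boundary-condition matrix `B^o_{11}` of Lemma 3 (odd `m`):
the `m × m` matrix whose row `j = 0, …, m−1` is
`((−1)^j, cos(jγ_1), sin(jγ_1), …, cos(jγ_{(m−1)/2}), sin(jγ_{(m−1)/2}))`,
`γ_k = π − kπ/m`, is invertible. -/
theorem stmt_10 (m : ℕ) (hm : Odd m) (hm0 : 0 < m)
    (γ : ℕ → ℝ) (hγ : ∀ k : ℕ, γ k = Real.pi - (k : ℝ) * Real.pi / (m : ℝ))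
    (B : Matrix (Fin m) (Fin m) ℝ)
    (hB : ∀ j c : Fin m, B j c =
      if c.val = 0 then (-1 : ℝ) ^ j.val
      else if c.val % 2 = 1
      then Real.cos ((j.val : ℝ) * γ ((c.val + 1) / 2))
      else Real.sin ((j.val : ℝ) * γ (c.val / 2))) :
    IsUnit B :=
  stmt_10_general m hm γ hγ B hB
end

section
/- Let m be an odd positive integer, ω_k = sin(kπ/m) for k = 1, …, (m−1)/2, and β ∈ ℝ. Define ζ_{k,ℓ} = β ω_k + ℓ k π/m. Let B be the m×m real matrix with rows indexed by ℓ = 0, …, m−1 whose first-column entries all equal 1 and whose entries in row ℓ and columns 2k, 2k+1 are cos(ζ_{k,ℓ}) and sin(ζ_{k,ℓ}), for k = 1, …, (m−1)/2. Then B is invertible for every β ∈ ℝ. -/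
/-!
If a real row vector `v` annihilates every column of `B`, the polynomial `P(z) = ∑ v_ℓ z^ℓ`
vanishes at `1` (first column) and, since the cos and sin columns of index `k` combine to
`e^{±iζ_{k,ℓ}} = e^{±iβω_k} (e^{±ikπ/m})^ℓ`, also at `e^{±ikπ/m}` for `k = 1, …, (m-1)/2`.
These are `m` distinct powers of the primitive `2m`-th root of unity `e^{iπ/m}`, so the
Vandermonde determinant forces `v = 0`.
-/

open Complex
open scoped Real Matrix

theorem IsPrimitiveRoot.eq_of_zpow_eq_zpow {K : Type*} [Field K] {ζ : K} {n : ℕ}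
    (hζ : IsPrimitiveRoot ζ n) {a b : ℤ} (hab : |a - b| < n) (h : ζ ^ a = ζ ^ b) : a = b := by
  have hn : n ≠ 0 := by
    rintro rfl
    exact (abs_nonneg (a - b)).not_gt (by exact_mod_cast hab)
  have hζ0 : ζ ≠ 0 := hζ.ne_zero hn
  have hdvd : (n : ℤ) ∣ a - b := by
    rw [← hζ.zpow_eq_one_iff_dvd, zpow_sub₀ hζ0, h, div_self (zpow_ne_zero _ hζ0)]
  exact sub_eq_zero.mp (Int.eq_zero_of_abs_lt_dvd hdvd hab)

theorem Complex.isPrimitiveRoot_exp_pi_mul_I_div {m : ℕ} (hm : m ≠ 0) :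
    IsPrimitiveRoot (exp (π * I / m)) (2 * m) := by
  convert isPrimitiveRoot_exp (2 * m) (by positivity) using 2
  push_cast
  field_simp

theorem Complex.sum_ofReal_mul_exp_eq_zero {ι : Type*} [Fintype ι] {v x : ι → ℝ}
    (hcos : ∑ i, v i * Real.cos (x i) = 0) (hsin : ∑ i, v i * Real.sin (x i) = 0) :
    ∑ i, (v i : ℂ) * exp (x i * I) = 0 := by
  simp_rw [exp_mul_I, ← ofReal_cos, ← ofReal_sin, mul_add, Finset.sum_add_distrib, ← mul_assoc,
    ← Finset.sum_mul, ← ofReal_mul, ← ofReal_sum, hcos, hsin]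
  simp

theorem Complex.sum_ofReal_mul_exp_neg_eq_zero {ι : Type*} [Fintype ι] {v x : ι → ℝ}
    (hcos : ∑ i, v i * Real.cos (x i) = 0) (hsin : ∑ i, v i * Real.sin (x i) = 0) :
    ∑ i, (v i : ℂ) * exp (↑(-x i) * I) = 0 := by
  refine sum_ofReal_mul_exp_eq_zero ?_ ?_
  · simpa only [Real.cos_neg] using hcos
  · simp only [Real.sin_neg, mul_neg, Finset.sum_neg_distrib, hsin, neg_zero]

/-- Column `2k - 1` carries the node `e^{ikπ/m}` and column `2k` the node `e^{-ikπ/m}`. -/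
def pairExponent (c : ℕ) : ℤ := if c % 2 = 1 then ((c + 1) / 2 : ℕ) else -((c / 2 : ℕ) : ℤ)

theorem pairExponent_injective : Function.Injective pairExponent := by
  intro a b h
  unfold pairExponent at h
  split_ifs at h <;> omega

theorem two_mul_abs_pairExponent_le (c : ℕ) : 2 * |pairExponent c| ≤ c + 1 := by
  unfold pairExponent
  split_ifs <;> simp only [abs_neg, Nat.abs_cast] <;> omega

/-- The angle `ζ_{k,ℓ} = β ω_k + ℓkπ/m`. -/
noncomputable def boundaryAngle (m : ℕ) (β : ℝ) (k ℓ : ℕ) : ℝ :=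
  β * Real.sin (k * π / m) + ℓ * k * π / m

noncomputable def boundaryMatrix (m : ℕ) (β : ℝ) : Matrix (Fin m) (Fin m) ℝ :=
  Matrix.of fun ℓ c =>
    if c.val = 0 then 1
    else if c.val % 2 = 1 then Real.cos (boundaryAngle m β ((c.val + 1) / 2) ℓ)
    else Real.sin (boundaryAngle m β (c.val / 2) ℓ)

section BoundaryMatrix

variable {m : ℕ} {β : ℝ}

theorem exp_boundaryAngle_mul_I (k ℓ : ℕ) :
    exp (boundaryAngle m β k ℓ * I) =
      exp (↑(β * Real.sin (k * π / m)) * I) * (exp (π * I / m) ^ (k : ℤ)) ^ ℓ := by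
  rw [← zpow_natCast, ← zpow_mul, ← exp_int_mul, ← exp_add, boundaryAngle]
  push_cast
  ring_nf

theorem exp_neg_boundaryAngle_mul_I (k ℓ : ℕ) :
    exp (↑(-boundaryAngle m β k ℓ) * I) =
      exp (↑(-(β * Real.sin (k * π / m))) * I) * (exp (π * I / m) ^ (-k : ℤ)) ^ ℓ := by
  rw [← zpow_natCast, ← zpow_mul, ← exp_int_mul, ← exp_add, boundaryAngle]
  push_cast
  ring_nf

theorem boundaryMatrix_apply_cos {k : ℕ} (hk : 0 < k) (hkm : 2 * k - 1 < m) (ℓ : Fin m) :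
    boundaryMatrix m β ℓ ⟨2 * k - 1, hkm⟩ = Real.cos (boundaryAngle m β k ℓ) := by
  simp only [boundaryMatrix, Matrix.of_apply, show 2 * k - 1 ≠ 0 by omega,
    show (2 * k - 1) % 2 = 1 by omega, show (2 * k - 1 + 1) / 2 = k by omega, if_false, if_true]

theorem boundaryMatrix_apply_sin {k : ℕ} (hk : 0 < k) (hkm : 2 * k < m) (ℓ : Fin m) :
    boundaryMatrix m β ℓ ⟨2 * k, hkm⟩ = Real.sin (boundaryAngle m β k ℓ) := by
  simp only [boundaryMatrix, Matrix.of_apply, show 2 * k ≠ 0 by omega,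
    show ¬(2 * k % 2 = 1) by omega, show 2 * k / 2 = k by omega, if_false]

theorem sum_mul_zpow_pow_eq_zero_of_vecMul_boundaryMatrix {v : Fin m → ℝ}
    (hv : v ᵥ* boundaryMatrix m β = 0) {k : ℕ} (hk : 0 < k) (hkm : 2 * k < m) :
    ∑ ℓ : Fin m, (v ℓ : ℂ) * (exp (π * I / m) ^ (k : ℤ)) ^ (ℓ : ℕ) = 0 ∧
      ∑ ℓ : Fin m, (v ℓ : ℂ) * (exp (π * I / m) ^ (-k : ℤ)) ^ (ℓ : ℕ) = 0 := by
  have hcos : ∑ ℓ : Fin m, v ℓ * Real.cos (boundaryAngle m β k ℓ) = 0 := by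
    have hkm' : 2 * k - 1 < m := by omega
    simpa only [Matrix.vecMul, dotProduct, boundaryMatrix_apply_cos hk hkm', Pi.zero_apply]
      using congrFun hv ⟨2 * k - 1, hkm'⟩
  have hsin : ∑ ℓ : Fin m, v ℓ * Real.sin (boundaryAngle m β k ℓ) = 0 := by
    simpa only [Matrix.vecMul, dotProduct, boundaryMatrix_apply_sin hk, Pi.zero_apply]
      using congrFun hv ⟨2 * k, hkm⟩
  constructor
  · have := sum_ofReal_mul_exp_eq_zero hcos hsin
    simp_rw [exp_boundaryAngle_mul_I, mul_left_comm _ (exp _), ← Finset.mul_sum] at this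
    exact (mul_eq_zero.mp this).resolve_left (exp_ne_zero _)
  · have := sum_ofReal_mul_exp_neg_eq_zero hcos hsin
    simp_rw [exp_neg_boundaryAngle_mul_I, mul_left_comm _ (exp _), ← Finset.mul_sum] at this
    exact (mul_eq_zero.mp this).resolve_left (exp_ne_zero _)

theorem sum_mul_zpow_pairExponent_pow_eq_zero_of_vecMul_boundaryMatrix (hm : Odd m)
    {v : Fin m → ℝ} (hv : v ᵥ* boundaryMatrix m β = 0) (c : Fin m) :
    ∑ ℓ : Fin m, (v ℓ : ℂ) * (exp (π * I / m) ^ pairExponent c) ^ (ℓ : ℕ) = 0 := by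
  obtain ⟨c, hc⟩ := c
  rcases Nat.eq_zero_or_pos c with rfl | hc0
  · have hsum := congrFun hv ⟨0, hc⟩
    simp only [Matrix.vecMul, dotProduct, boundaryMatrix, Matrix.of_apply, if_true, mul_one,
      Pi.zero_apply] at hsum
    simpa [pairExponent] using congrArg ((↑) : ℝ → ℂ) hsum
  · have hkm : 2 * ((c + 1) / 2) < m := by obtain ⟨j, rfl⟩ := hm; omega
    obtain ⟨hpos, hneg⟩ := sum_mul_zpow_pow_eq_zero_of_vecMul_boundaryMatrix hv (by omega) hkm
    simp only [pairExponent]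
    split_ifs with hodd
    · exact hpos
    · rwa [show (c + 1) / 2 = c / 2 by omega] at hneg

theorem injective_zpow_pairExponent (hm0 : m ≠ 0) :
    Function.Injective fun c : Fin m => exp (π * I / m) ^ pairExponent c := by
  intro a b h
  refine Fin.ext <| pairExponent_injective <|
    (isPrimitiveRoot_exp_pi_mul_I_div hm0).eq_of_zpow_eq_zpow ?_ h
  have ha := two_mul_abs_pairExponent_le a
  have hb := two_mul_abs_pairExponent_le b
  have := abs_sub (pairExponent a) (pairExponent b)
  push_cast
  omega

theorem isUnit_boundaryMatrix (hm : Odd m) (β : ℝ) : IsUnit (boundaryMatrix m β) := by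
  rw [Matrix.isUnit_iff_isUnit_det, isUnit_iff_ne_zero, Ne, ← Matrix.exists_vecMul_eq_zero_iff]
  rintro ⟨v, hv0, hv⟩
  have hvC : (fun ℓ => (v ℓ : ℂ)) = 0 :=
    Matrix.eq_zero_of_forall_index_sum_mul_pow_eq_zero (injective_zpow_pairExponent hm.pos.ne')
      (sum_mul_zpow_pairExponent_pow_eq_zero_of_vecMul_boundaryMatrix hm hv)
  exact hv0 (funext fun ℓ => ofReal_eq_zero.mp (congrFun hvC ℓ))

end BoundaryMatrix

theorem stmt_11_general (m : ℕ) (hm : Odd m) (β : ℝ)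
    (B : Matrix (Fin m) (Fin m) ℝ)
    (hB : ∀ l c : Fin m, B l c =
      if c.val = 0 then (1 : ℝ)
      else if c.val % 2 = 1
      then Real.cos (β * Real.sin (((((c.val + 1) / 2 : ℕ)) : ℝ) * Real.pi / (m : ℝ)) +
        (l.val : ℝ) * ((((c.val + 1) / 2 : ℕ)) : ℝ) * Real.pi / (m : ℝ))
      else Real.sin (β * Real.sin ((((c.val / 2 : ℕ)) : ℝ) * Real.pi / (m : ℝ)) +
        (l.val : ℝ) * (((c.val / 2 : ℕ)) : ℝ) * Real.pi / (m : ℝ))) :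
    IsUnit B := by
  have hB' : B = boundaryMatrix m β := Matrix.ext hB
  exact hB' ▸ isUnit_boundaryMatrix hm β

/-- Invertibility of the boundary-condition matrix `B^o_{22}` of Lemma 3 (odd `m`):
with `ω_k = sin(kπ/m)` and `ζ_{k,ℓ} = βω_k + ℓkπ/m`, the `m × m` matrix whose row `ℓ` is
`(1, cos(ζ_{1,ℓ}), sin(ζ_{1,ℓ}), …, cos(ζ_{(m−1)/2,ℓ}), sin(ζ_{(m−1)/2,ℓ}))`
is invertible for every `β ∈ ℝ`. -/
theorem stmt_11 (m : ℕ) (hm : Odd m) (hm0 : 0 < m) (β : ℝ)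
    (B : Matrix (Fin m) (Fin m) ℝ)
    (hB : ∀ l c : Fin m, B l c =
      if c.val = 0 then (1 : ℝ)
      else if c.val % 2 = 1
      then Real.cos (β * Real.sin (((((c.val + 1) / 2 : ℕ)) : ℝ) * Real.pi / (m : ℝ)) +
        (l.val : ℝ) * ((((c.val + 1) / 2 : ℕ)) : ℝ) * Real.pi / (m : ℝ))
      else Real.sin (β * Real.sin ((((c.val / 2 : ℕ)) : ℝ) * Real.pi / (m : ℝ)) +
        (l.val : ℝ) * (((c.val / 2 : ℕ)) : ℝ) * Real.pi / (m : ℝ))) :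
    IsUnit B :=
  stmt_11_general m hm β B hB
end
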